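/- Let R be a discrete valuation ring with fraction field F, set A = F × F with the swap involution σ(a,b) = (b,a), Λ = R × R, and e = (1,0) ∈ A. Let V be a finitely generated free A-module equipped with a nondegenerate σ-hermitian form Φ : V × V → A (additive in both arguments, Φ(αx, y) = αΦ(x,y), Φ(x, αy) = Φ(x,y)σ(α), Φ(y,x) = σ(Φ(x,y)) for α ∈ A). Then for every Λ-lattice M in V there is exactly one Λ-lattice Y in V satisfying eY = eM and Y = Y^#; it is given by Y = eM ⊕ {x ∈ (1−e)V : Φ(eM, x) ⊆ Λ}. -/

import Mathlib

def pairSubring (R F : Type*) [CommRing R] [Field F] [Algebra R F] : Subring (F × F) :=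
  ((algebraMap R F).prodMap (algebraMap R F)).range

def eImage (F : Type*) {V : Type*} [Field F] [AddCommGroup V] [Module (F × F) V]
    (S : Set V) : Set V :=
  (fun w => (((1 : F), (0 : F)) : F × F) • w) '' S

/-
Since `e = (1, 0)` and `f = (0, 1)` lie in `Λ`, a `Λ`-lattice is the same as an `e`-stable
`R`-lattice `L` in the `F`-space `V` (with `F` acting diagonally), and `L = eL ⊕ fL`. On such
lattices the `Λ`-dual for `Φ` is the `R`-dual for the symmetric nondegenerate `F`-bilinear form
`B = tr ∘ Φ`, for which `e` and `f = 1 - e` are adjoint to each other; hence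
`(eL ⊕ fL')^# = e L'^# ⊕ f L^#`. Together with biduality `M^## = M` this makes `eM ⊕ f M^#`
unimodular, and any unimodular `Y` with `eY = eM` has `fY = f Y^# = f (eY)^# = f (eM)^#`, which is
the stated complement.
-/

open LinearMap (BilinForm)
open Module

namespace IsIdempotentElem

variable {K W : Type*} [Field K] [AddCommGroup W] [Module K W] {P : Module.End K W}

theorem apply_apply (hP : IsIdempotentElem P) (x : W) : P (P x) = P x :=
  congr($hP.eq x)

theorem apply_one_sub_apply (hP : IsIdempotentElem P) (x : W) : P ((1 - P) x) = 0 :=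
  congr($hP.mul_one_sub_self x)

theorem one_sub_apply_apply (hP : IsIdempotentElem P) (x : W) : (1 - P) (P x) = 0 :=
  congr($hP.one_sub_mul_self x)

end IsIdempotentElem

namespace Submodule

variable {R K W : Type*} [CommRing R] [Field K] [Algebra R K] [AddCommGroup W] [Module K W]
  [Module R W] [IsScalarTower R K W]

section Idempotent

variable {P : Module.End K W}

theorem mem_map_iff_of_isIdempotentElem (hP : IsIdempotentElem P) {L : Submodule R W}
    (hL : ∀ x ∈ L, P x ∈ L) {y : W} :
    y ∈ L.map (P.restrictScalars R) ↔ y ∈ L ∧ P y = y := by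
  constructor
  · rintro ⟨x, hx, rfl⟩
    exact ⟨hL x hx, hP.apply_apply x⟩
  · rintro ⟨hy, hPy⟩
    exact ⟨y, hy, hPy⟩

/-- For `P = e` this is the lattice `eL ⊕ fL'`. -/
def glue (P : Module.End K W) (L L' : Submodule R W) : Submodule R W :=
  L.map (P.restrictScalars R) ⊔ L'.map ((1 - P).restrictScalars R)

theorem apply_mem_glue_left {L : Submodule R W} (L' : Submodule R W) {x : W} (hx : x ∈ L) :
    P x ∈ glue P L L' :=
  mem_sup_left ⟨x, hx, rfl⟩

theorem one_sub_apply_mem_glue_right (L : Submodule R W) {L' : Submodule R W} {x : W}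
    (hx : x ∈ L') : (1 - P) x ∈ glue P L L' :=
  mem_sup_right ⟨x, hx, rfl⟩

theorem mem_glue (hP : IsIdempotentElem P) {L L' : Submodule R W}
    (hL : ∀ x ∈ L, P x ∈ L) (hL' : ∀ x ∈ L', P x ∈ L') {x : W} :
    x ∈ glue P L L' ↔ P x ∈ L ∧ (1 - P) x ∈ L' := by
  constructor
  · intro hx
    obtain ⟨_, ⟨l, hl, rfl⟩, _, ⟨l', hl', rfl⟩, rfl⟩ := mem_sup.1 hx
    simp only [LinearMap.coe_restrictScalars, map_add, hP.apply_apply, hP.apply_one_sub_apply,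
      hP.one_sub_apply_apply, hP.one_sub.apply_apply, add_zero, zero_add]
    exact ⟨hL l hl, sub_mem hl' (hL' l' hl')⟩
  · rintro ⟨h, h'⟩
    exact mem_sup.2 ⟨P x, ⟨P x, h, hP.apply_apply x⟩, (1 - P) x,
      ⟨(1 - P) x, h', hP.one_sub.apply_apply x⟩, by simp⟩

theorem apply_mem_glue (hP : IsIdempotentElem P) {L L' : Submodule R W}
    (hL : ∀ x ∈ L, P x ∈ L) (hL' : ∀ x ∈ L', P x ∈ L') {x : W}
    (hx : x ∈ glue P L L') :
    P x ∈ glue P L L' := by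
  rw [mem_glue hP hL hL'] at hx ⊢
  rw [hP.apply_apply, hP.one_sub_apply_apply]
  exact ⟨hx.1, zero_mem _⟩

theorem glue_self (hP : IsIdempotentElem P) {L : Submodule R W} (hL : ∀ x ∈ L, P x ∈ L) :
    glue P L L = L := by
  ext x
  rw [mem_glue hP hL hL]
  exact ⟨fun ⟨h, h'⟩ => by simpa using add_mem h h',
    fun hx => ⟨hL x hx, sub_mem hx (hL x hx)⟩⟩

theorem map_glue (hP : IsIdempotentElem P) {L L' : Submodule R W}
    (hL : ∀ x ∈ L, P x ∈ L) (hL' : ∀ x ∈ L', P x ∈ L') :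
    (glue P L L').map (P.restrictScalars R) = L.map (P.restrictScalars R) := by
  ext y
  rw [mem_map_iff_of_isIdempotentElem hP (fun x => apply_mem_glue hP hL hL'), mem_glue hP hL hL',
    mem_map_iff_of_isIdempotentElem hP hL]
  constructor
  · rintro ⟨⟨h, -⟩, hy⟩
    exact ⟨hy ▸ h, hy⟩
  · rintro ⟨h, hy⟩
    refine ⟨⟨hy.symm ▸ h, ?_⟩, hy⟩
    rw [← hy, hP.one_sub_apply_apply]
    exact zero_mem _

theorem isLattice_glue (P : Module.End K W) (L L' : Submodule R W) [IsLattice K L]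
    [IsLattice K L'] : IsLattice K (glue P L L') := by
  refine ⟨(IsLattice.fg.map _).sup (IsLattice.fg.map _), eq_top_iff.2 fun x _ => ?_⟩
  have hmap : ∀ (Q : Module.End K W) (N : Submodule R W) [IsLattice K N],
      Q x ∈ span K (N.map (Q.restrictScalars R) : Set W) := by
    intro Q N _
    rw [map_coe, LinearMap.coe_restrictScalars, span_image, IsLattice.span_eq_top]
    exact mem_map_of_mem mem_top
  simpa [glue] using add_mem (span_mono (le_sup_left : _ ≤ glue P L L') (hmap P L))
    (span_mono (le_sup_right : _ ≤ glue P L L') (hmap (1 - P) L'))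

end Idempotent

section Lattice

theorem isLattice_span_range {ι : Type*} [Finite ι] (b : Basis ι K W) :
    IsLattice K (span R (Set.range b)) :=
  ⟨fg_span (Set.finite_range b), by rw [span_span_of_tower, b.span_eq]⟩

variable [IsDomain R] [IsPrincipalIdealRing R] [IsFractionRing R K]

theorem IsLattice.span_range_extendOfIsLattice (L : Submodule R W) [IsLattice K L] :
    span R (Set.range ((Free.chooseBasis R L).extendOfIsLattice K)) = L := by
  have : ⇑((Free.chooseBasis R L).extendOfIsLattice K) = L.subtype ∘ Free.chooseBasis R L :=
    funext (Basis.extendOfIsLattice_apply K _)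
  rw [this, Set.range_comp, span_image, Basis.span_eq, Submodule.map_top, range_subtype]

end Lattice

end Submodule

namespace LinearMap.BilinForm

variable {R K W : Type*} [CommRing R] [Field K] [Algebra R K] [AddCommGroup W] [Module K W]
  [Module R W] [IsScalarTower R K W] {B : BilinForm K W}

section Idempotent

open Submodule

variable {P : Module.End K W}

theorem isAdjointPair_one_sub (h : B.IsAdjointPair B P ⇑(1 - P)) :
    B.IsAdjointPair B ⇑(1 - P) P := fun x y => by
  simp only [LinearMap.sub_apply, Module.End.one_apply, map_sub, LinearMap.sub_apply, h x y]
  abel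

theorem apply_mem_dualSubmodule (hadj : B.IsAdjointPair B P ⇑(1 - P))
    {L : Submodule R W} (hL : ∀ x ∈ L, P x ∈ L) {x : W} (hx : x ∈ B.dualSubmodule L) :
    P x ∈ B.dualSubmodule L := fun y hy => by
  rw [hadj x y]
  exact hx _ (sub_mem hy (hL y hy))

theorem dualSubmodule_glue (hP : IsIdempotentElem P) (hadj : B.IsAdjointPair B P ⇑(1 - P))
    {L L' : Submodule R W} (hL : ∀ x ∈ L, P x ∈ L) (hL' : ∀ x ∈ L', P x ∈ L') :
    B.dualSubmodule (glue P L L') = glue P (B.dualSubmodule L') (B.dualSubmodule L) := by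
  ext x
  rw [mem_glue hP (fun _ => apply_mem_dualSubmodule hadj hL')
    (fun _ => apply_mem_dualSubmodule hadj hL)]
  constructor
  · intro hx
    refine ⟨fun l' hl' => ?_, fun l hl => ?_⟩
    · rw [hadj x l']
      exact hx _ (one_sub_apply_mem_glue_right L hl')
    · rw [isAdjointPair_one_sub hadj x l]
      exact hx _ (apply_mem_glue_left L' hl)
  · rintro ⟨h, h'⟩ y hy
    rw [mem_glue hP hL hL'] at hy
    have hsplit : B x y = B ((1 - P) x) (P y) + B (P x) ((1 - P) y) := by
      rw [isAdjointPair_one_sub hadj, hadj, hP.apply_apply, hP.one_sub.apply_apply, ← map_add]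
      simp
    rw [hsplit]
    exact add_mem (h' _ hy.1) (h _ hy.2)

theorem dualSubmodule_map_one_sub (hP : IsIdempotentElem P) (hadj : B.IsAdjointPair B P ⇑(1 - P))
    {L : Submodule R W} (hL : ∀ x ∈ L, P x ∈ L) :
    (B.dualSubmodule (L.map (P.restrictScalars R))).map ((1 - P).restrictScalars R) =
      (B.dualSubmodule L).map ((1 - P).restrictScalars R) := by
  have hE : ∀ x ∈ L.map (P.restrictScalars R), P x ∈ L.map (P.restrictScalars R) := by
    rintro _ ⟨l, hl, rfl⟩
    exact ⟨P l, hL l hl, by simp [hP.apply_apply]⟩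
  have hstable : ∀ N : Submodule R W, (∀ x ∈ N, P x ∈ N) →
      ∀ x ∈ B.dualSubmodule N, (1 - P) x ∈ B.dualSubmodule N := fun N hN x hx =>
    sub_mem hx (apply_mem_dualSubmodule hadj hN hx)
  ext y
  rw [mem_map_iff_of_isIdempotentElem hP.one_sub (hstable _ hE),
    mem_map_iff_of_isIdempotentElem hP.one_sub (hstable _ hL)]
  refine and_congr_left fun hy => ⟨fun h l hl => ?_, fun h _ ⟨l, hl, hu⟩ => ?_⟩
  · rw [← hy, isAdjointPair_one_sub hadj]
    exact h _ ⟨l, hl, rfl⟩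
  · rw [← hu, LinearMap.coe_restrictScalars, ← isAdjointPair_one_sub hadj, hy]
    exact h l hl

end Idempotent

section Lattice

open Submodule

variable [IsDomain R] [IsPrincipalIdealRing R] [IsFractionRing R K]

theorem isLattice_dualSubmodule (hB : B.Nondegenerate) (L : Submodule R W) [IsLattice K L] :
    IsLattice K (B.dualSubmodule L) := by
  classical
  rw [← IsLattice.span_range_extendOfIsLattice L, dualSubmodule_span_of_basis B hB]
  exact isLattice_span_range _

theorem dualSubmodule_dualSubmodule_of_isLattice (hB : B.Nondegenerate) (hB' : B.IsSymm)
    (L : Submodule R W) [IsLattice K L] : B.dualSubmodule (B.dualSubmodule L) = L := by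
  rw [← IsLattice.span_range_extendOfIsLattice L, dualSubmodule_dualSubmodule_of_basis B hB hB']

theorem dualSubmodule_glue_dualSubmodule {P : Module.End K W} (hP : IsIdempotentElem P)
    (hadj : B.IsAdjointPair B P ⇑(1 - P)) (hB : B.Nondegenerate) (hB' : B.IsSymm)
    {M : Submodule R W} [IsLattice K M] (hM : ∀ x ∈ M, P x ∈ M) :
    B.dualSubmodule (glue P M (B.dualSubmodule M)) = glue P M (B.dualSubmodule M) := by
  rw [dualSubmodule_glue hP hadj hM (fun _ => apply_mem_dualSubmodule hadj hM),
    dualSubmodule_dualSubmodule_of_isLattice hB hB']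

end Lattice

theorem eq_sup_map_dualSubmodule_of_dualSubmodule_eq {P : Module.End K W}
    (hP : IsIdempotentElem P) (hadj : B.IsAdjointPair B P ⇑(1 - P)) {Y : Submodule R W}
    (hY : ∀ x ∈ Y, P x ∈ Y) (hdual : B.dualSubmodule Y = Y) :
    Y = Y.map (P.restrictScalars R) ⊔
      (B.dualSubmodule (Y.map (P.restrictScalars R))).map ((1 - P).restrictScalars R) :=
  calc Y = Submodule.glue P Y (B.dualSubmodule Y) := by rw [hdual, Submodule.glue_self hP hY]
    _ = _ := by rw [Submodule.glue, dualSubmodule_map_one_sub hP hadj hY]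

end LinearMap.BilinForm

section PairSubring

variable {R F : Type*} [CommRing R] [Field F] [Algebra R F]

theorem mem_pairSubring {p : F × F} :
    p ∈ pairSubring R F ↔ p.1 ∈ (1 : Submodule R F) ∧ p.2 ∈ (1 : Submodule R F) := by
  rw [Submodule.mem_one, Submodule.mem_one]
  constructor
  · rintro ⟨⟨a, b⟩, rfl⟩
    exact ⟨⟨a, rfl⟩, ⟨b, rfl⟩⟩
  · rintro ⟨⟨a, ha⟩, ⟨b, hb⟩⟩
    exact ⟨(a, b), Prod.ext ha hb⟩

theorem fst_mem_pairSubring : ((1, 0) : F × F) ∈ pairSubring R F :=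
  mem_pairSubring.2 ⟨Submodule.mem_one.2 ⟨1, map_one _⟩, zero_mem _⟩

theorem snd_mem_pairSubring : ((0, 1) : F × F) ∈ pairSubring R F :=
  mem_pairSubring.2 ⟨zero_mem _, Submodule.mem_one.2 ⟨1, map_one _⟩⟩

theorem swap_mem_pairSubring {p : F × F} :
    (p.2, p.1) ∈ pairSubring R F ↔ p ∈ pairSubring R F := by
  simp only [mem_pairSubring, and_comm]

instance : Algebra R (pairSubring R F) :=
  ((algebraMap R (F × F)).codRestrict (pairSubring R F)
    fun r => RingHom.mem_range.2 ⟨(r, r), rfl⟩).toAlgebra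

instance : Module.Finite R (pairSubring R F) :=
  Module.Finite.of_surjective
    ({ toFun := fun x => ⟨(algebraMap R F x.1, algebraMap R F x.2), x, rfl⟩
       map_add' := fun x y => Subtype.ext (by simp)
       map_smul' := fun r x => Subtype.ext (by
         simp [Algebra.smul_def, RingHom.algebraMap_toAlgebra]; rfl) } :
      R × R →ₗ[R] pairSubring R F)
    (by rintro ⟨_, x, rfl⟩; exact ⟨x, rfl⟩)

end PairSubring

section Hermitian

variable {F V : Type*} [Field F] [AddCommGroup V] [Module (F × F) V]

structure IsSwapHermitian (Φ : V → V → F × F) : Prop where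
  add_left : ∀ x x' y : V, Φ (x + x') y = Φ x y + Φ x' y
  add_right : ∀ x y y' : V, Φ x (y + y') = Φ x y + Φ x y'
  smul_left : ∀ (a : F × F) (x y : V), Φ (a • x) y = a * Φ x y
  smul_right : ∀ (a : F × F) (x y : V), Φ x (a • y) = Φ x y * (a.2, a.1)
  swap : ∀ x y : V, Φ y x = ((Φ x y).2, (Φ x y).1)

theorem snd_smul_eq_sub (v : V) : ((0, 1) : F × F) • v = v - ((1, 0) : F × F) • v := by
  rw [eq_sub_iff_add_eq, ← add_smul, Prod.mk_add_mk, zero_add, add_zero, ← Prod.one_eq_mk,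
    one_smul]

variable [Module F V] [IsScalarTower F (F × F) V]

theorem smul_eq_diag_smul (c : F) (v : V) : c • v = ((c, c) : F × F) • v :=
  algebra_compatible_smul (F × F) c v

variable (F V) in
def eProj : Module.End F V :=
  (LinearMap.lsmul (F × F) V (1, 0)).restrictScalars F

theorem eProj_apply (v : V) : eProj F V v = ((1, 0) : F × F) • v := rfl

theorem isIdempotentElem_eProj : IsIdempotentElem (eProj F V) :=
  LinearMap.ext fun v => by simp [eProj_apply, smul_smul]

theorem one_sub_eProj_apply (v : V) : (1 - eProj F V) v = ((0, 1) : F × F) • v := by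
  rw [snd_smul_eq_sub]
  rfl

namespace IsSwapHermitian

variable {Φ : V → V → F × F} (hΦ : IsSwapHermitian Φ)

def traceForm : BilinForm F V :=
  LinearMap.mk₂ F (fun x y => (Φ x y).1 + (Φ x y).2)
    (fun x x' y => by simp only [hΦ.add_left, Prod.fst_add, Prod.snd_add]; ring)
    (fun c x y => by
      simp only [smul_eq_diag_smul c x, hΦ.smul_left, Prod.fst_mul, Prod.snd_mul, smul_eq_mul]
      ring)
    (fun x y y' => by simp only [hΦ.add_right, Prod.fst_add, Prod.snd_add]; ring)
    (fun c x y => by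
      simp only [smul_eq_diag_smul c y, hΦ.smul_right, Prod.fst_mul, Prod.snd_mul, smul_eq_mul]
      ring)

theorem traceForm_apply (x y : V) : hΦ.traceForm x y = (Φ x y).1 + (Φ x y).2 := rfl

theorem traceForm_apply_fst_smul (x y : V) :
    hΦ.traceForm x (((1, 0) : F × F) • y) = (Φ x y).2 := by
  simp [traceForm_apply, hΦ.smul_right]

theorem traceForm_apply_snd_smul (x y : V) :
    hΦ.traceForm x (((0, 1) : F × F) • y) = (Φ x y).1 := by
  simp [traceForm_apply, hΦ.smul_right]

theorem traceForm_isSymm : hΦ.traceForm.IsSymm :=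
  ⟨fun x y => by rw [traceForm_apply, traceForm_apply, hΦ.swap x y, add_comm]⟩

theorem traceForm_nondegenerate (hnd : ∀ x : V, (∀ y : V, Φ x y = 0) → x = 0) :
    hΦ.traceForm.Nondegenerate := by
  refine hΦ.traceForm_isSymm.isRefl.nondegenerate_iff_separatingLeft.2 fun x hx =>
    hnd x fun y => ?_
  rw [Prod.ext_iff, ← hΦ.traceForm_apply_snd_smul, ← hΦ.traceForm_apply_fst_smul, hx, hx]
  exact ⟨rfl, rfl⟩

theorem isAdjointPair_traceForm :
    hΦ.traceForm.IsAdjointPair hΦ.traceForm (eProj F V) ⇑(1 - eProj F V) := fun x y => by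
  rw [one_sub_eProj_apply, traceForm_apply_snd_smul, traceForm_apply, eProj_apply, hΦ.smul_left]
  simp

end IsSwapHermitian

section Lattice

open Submodule
open scoped Pointwise

variable {R : Type*} [CommRing R] [Algebra R F]

theorem span_eq_top_iff_span_prod_eq_top (Y : Submodule (pairSubring R F) V) :
    span F (Y : Set V) = ⊤ ↔ span (F × F) (Y : Set V) = ⊤ := by
  refine ⟨fun h => eq_top_iff.2 fun v _ => span_le_restrictScalars F (F × F) _ (h ▸ mem_top),
    fun h => ?_⟩
  let s : Set (F × F) := {(1, 0), (0, 1)}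
  have hs : span F s = ⊤ := eq_top_iff.2 fun a _ => by
    rw [show a = a.1 • ((1, 0) : F × F) + a.2 • ((0, 1) : F × F) by ext <;> simp]
    exact add_mem (smul_mem _ _ (subset_span (by simp [s])))
      (smul_mem _ _ (subset_span (by simp [s])))
  have hsY : s • (Y : Set V) ⊆ (Y : Set V) := by
    rintro _ ⟨a, ha, y, hy, rfl⟩
    rcases ha with rfl | rfl
    · exact Y.smul_mem ⟨_, fst_mem_pairSubring⟩ hy
    · exact Y.smul_mem ⟨_, snd_mem_pairSubring⟩ hy
  have hspan := span_smul_of_span_eq_top hs (Y : Set V)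
  rw [h, restrictScalars_top] at hspan
  exact eq_top_iff.2 (hspan ▸ span_mono hsY)

variable [Module R V] [IsScalarTower R F V]

instance : IsScalarTower R (pairSubring R F) V :=
  ⟨fun r a v => by
    rw [Algebra.smul_def, mul_smul, algebra_compatible_smul F r, smul_eq_diag_smul]
    rfl⟩

variable {Φ : V → V → F × F}

theorem IsSwapHermitian.coe_dualSubmodule_traceForm (hΦ : IsSwapHermitian Φ) (L : Submodule R V)
    (hL : ∀ y ∈ L, eProj F V y ∈ L) :
    (hΦ.traceForm.dualSubmodule L : Set V) = {x | ∀ y ∈ L, Φ x y ∈ pairSubring R F} := by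
  ext x
  simp only [SetLike.mem_coe, LinearMap.BilinForm.mem_dualSubmodule]
  -- `(Φ x y).1` and `(Φ x y).2` are the traces of `Φ x (f y)` and `Φ x (e y)`.
  refine ⟨fun h y hy => mem_pairSubring.2 ⟨?_, ?_⟩, fun h y hy => ?_⟩
  · rw [← hΦ.traceForm_apply_snd_smul, ← one_sub_eProj_apply]
    exact h _ (sub_mem hy (hL y hy))
  · rw [← hΦ.traceForm_apply_fst_smul]
    exact h _ (hL y hy)
  · exact add_mem (mem_pairSubring.1 (h y hy)).1 (mem_pairSubring.1 (h y hy)).2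

theorem IsSwapHermitian.mem_map_dualSubmodule_traceForm_iff (hΦ : IsSwapHermitian Φ)
    {E : Submodule R V} (hE : ∀ y ∈ E, eProj F V y ∈ E) {x : V} :
    x ∈ (hΦ.traceForm.dualSubmodule E).map ((1 - eProj F V).restrictScalars R) ↔
      (∃ v, x = ((0, 1) : F × F) • v) ∧ ∀ u ∈ E, Φ u x ∈ pairSubring R F := by
  have hdual (y : V) (hy : y ∈ hΦ.traceForm.dualSubmodule E) :
      (1 - eProj F V) y ∈ hΦ.traceForm.dualSubmodule E :=
    sub_mem hy
      (LinearMap.BilinForm.apply_mem_dualSubmodule (R := R) hΦ.isAdjointPair_traceForm hE hy)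
  rw [mem_map_iff_of_isIdempotentElem (isIdempotentElem_eProj (F := F) (V := V)).one_sub hdual,
    ← SetLike.mem_coe, hΦ.coe_dualSubmodule_traceForm E hE, one_sub_eProj_apply, and_comm]
  refine and_congr ⟨fun h => ⟨x, h.symm⟩, ?_⟩ (forall₂_congr fun u _ => ?_)
  · rintro ⟨v, rfl⟩
    rw [smul_smul]
    simp
  · rw [hΦ.swap, swap_mem_pairSubring]

theorem isLattice_restrictScalars_iff (Y : Submodule (pairSubring R F) V) :
    IsLattice F (Y.restrictScalars R) ↔ Y.FG ∧ span (F × F) (Y : Set V) = ⊤ := by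
  rw [← FG.restrictScalars_iff (R := R), ← span_eq_top_iff_span_prod_eq_top]
  exact ⟨fun ⟨h₁, h₂⟩ => ⟨h₁, h₂⟩, fun ⟨h₁, h₂⟩ => ⟨h₁, h₂⟩⟩

theorem exists_restrictScalars_eq_of_eProj_mem (L : Submodule R V)
    (hL : ∀ y ∈ L, eProj F V y ∈ L) :
    ∃ Y : Submodule (pairSubring R F) V, Y.restrictScalars R = L := by
  refine ⟨{ L with smul_mem' := fun a v hv => ?_ }, rfl⟩
  obtain ⟨⟨r, s⟩, ha⟩ := a.2
  have : a • v = r • eProj F V v + s • (1 - eProj F V) v := by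
    rw [one_sub_eProj_apply, eProj_apply, algebra_compatible_smul F r, algebra_compatible_smul F s,
      smul_eq_diag_smul, smul_eq_diag_smul, smul_smul, smul_smul, ← add_smul]
    show (a : F × F) • v = _
    rw [← ha]
    congr 1
    ext <;> simp
  rw [this]
  exact add_mem (L.smul_mem r (hL v hv)) (L.smul_mem s (sub_mem hv (hL v hv)))

theorem IsSwapHermitian.coe_eq_iff_dualSubmodule_eq (hΦ : IsSwapHermitian Φ)
    (Y : Submodule (pairSubring R F) V) :
    (Y : Set V) = {x | ∀ y ∈ Y, Φ x y ∈ pairSubring R F} ↔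
      hΦ.traceForm.dualSubmodule (Y.restrictScalars R) = Y.restrictScalars R := by
  rw [SetLike.ext'_iff (p := hΦ.traceForm.dualSubmodule _),
    hΦ.coe_dualSubmodule_traceForm (Y.restrictScalars R) fun y hy =>
      Y.smul_mem ⟨_, fst_mem_pairSubring⟩ hy]
  exact eq_comm

theorem IsSwapHermitian.coe_sup_map_dualSubmodule (hΦ : IsSwapHermitian Φ)
    (M : Submodule (pairSubring R F) V) :
    (((M.restrictScalars R).map ((eProj F V).restrictScalars R) ⊔
        (hΦ.traceForm.dualSubmodule
          ((M.restrictScalars R).map ((eProj F V).restrictScalars R))).map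
            ((1 - eProj F V).restrictScalars R) : Submodule R V) : Set V) =
      {z : V | ∃ u ∈ eImage F (M : Set V), ∃ x : V,
        (∃ v : V, x = (((0 : F), (1 : F)) : F × F) • v) ∧
        (∀ u' ∈ eImage F (M : Set V), Φ u' x ∈ pairSubring R F) ∧
        z = u + x} := by
  have hE : ∀ y ∈ (M.restrictScalars R).map ((eProj F V).restrictScalars R),
      eProj F V y ∈ (M.restrictScalars R).map ((eProj F V).restrictScalars R) := by
    rintro _ ⟨m, hm, rfl⟩
    exact ⟨m, hm, (isIdempotentElem_eProj.apply_apply m).symm⟩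
  ext z
  simp only [SetLike.mem_coe, mem_sup, hΦ.mem_map_dualSubmodule_traceForm_iff hE]
  change _ ↔ ∃ u ∈ (M.restrictScalars R).map ((eProj F V).restrictScalars R), _
  constructor
  · rintro ⟨u, hu, x, hx, rfl⟩
    exact ⟨u, hu, x, hx.1, hx.2, rfl⟩
  · rintro ⟨u, hu, x, hx₁, hx₂, rfl⟩
    exact ⟨u, hu, x, ⟨hx₁, hx₂⟩, rfl⟩

end Lattice

end Hermitian

theorem Function.Injective.existsUnique_and_of_forall_eq {α β : Type*} {f : α → β}
    (hf : Function.Injective f) {p : α → Prop} {b : β} (hex : ∃ a, p a)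
    (h : ∀ a, p a → f a = b) : (∃! a, p a) ∧ ∀ a, p a → f a = b :=
  ⟨hex.elim fun a ha => ⟨a, ha, fun a' ha' => hf ((h a' ha').trans (h a ha).symm)⟩, h⟩

open Submodule LinearMap.BilinForm in
theorem unique_unimodular_lattice_with_given_e_part_general
    {R F : Type*} [CommRing R] [IsDomain R] [IsDiscreteValuationRing R]
    [Field F] [Algebra R F] [IsFractionRing R F]
    {V : Type*} [AddCommGroup V] [Module (F × F) V]
    (Φ : V → V → F × F)
    (hadd₁ : ∀ x x' y : V, Φ (x + x') y = Φ x y + Φ x' y)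
    (hadd₂ : ∀ x y y' : V, Φ x (y + y') = Φ x y + Φ x y')
    (hsmul₁ : ∀ (a : F × F) (x y : V), Φ (a • x) y = a * Φ x y)
    (hsmul₂ : ∀ (a : F × F) (x y : V), Φ x (a • y) = Φ x y * (a.2, a.1))
    (hherm : ∀ x y : V, Φ y x = ((Φ x y).2, (Φ x y).1))
    (hnd : ∀ x : V, (∀ y : V, Φ x y = 0) → x = 0)
    (M : Submodule (pairSubring R F) V)
    (hMfg : M.FG) (hMfull : Submodule.span (F × F) (M : Set V) = ⊤) :
    (∃! Y : Submodule (pairSubring R F) V,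
      (Y.FG ∧ Submodule.span (F × F) (Y : Set V) = ⊤) ∧
      eImage F (Y : Set V) = eImage F (M : Set V) ∧
      (Y : Set V) = {x : V | ∀ y ∈ Y, Φ x y ∈ pairSubring R F}) ∧
    (∀ Y : Submodule (pairSubring R F) V,
      ((Y.FG ∧ Submodule.span (F × F) (Y : Set V) = ⊤) ∧
        eImage F (Y : Set V) = eImage F (M : Set V) ∧
        (Y : Set V) = {x : V | ∀ y ∈ Y, Φ x y ∈ pairSubring R F}) →
      (Y : Set V) = {z : V | ∃ u ∈ eImage F (M : Set V), ∃ x : V,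
        (∃ v : V, x = (((0 : F), (1 : F)) : F × F) • v) ∧
        (∀ u' ∈ eImage F (M : Set V), Φ u' x ∈ pairSubring R F) ∧
        z = u + x}) := by
  -- `F` and `R` act on `V` through their diagonal embeddings into `F × F`.
  let : Module F V := Module.compHom V (algebraMap F (F × F))
  have : IsScalarTower F (F × F) V := IsScalarTower.of_algebraMap_smul fun _ _ => rfl
  let : Module R V := Module.compHom V (algebraMap R F)
  have : IsScalarTower R F V := IsScalarTower.of_algebraMap_smul fun _ _ => rfl
  have hΦ : IsSwapHermitian Φ := ⟨hadd₁, hadd₂, hsmul₁, hsmul₂, hherm⟩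
  have hP := isIdempotentElem_eProj (F := F) (V := V)
  have hadj := hΦ.isAdjointPair_traceForm
  have hB := hΦ.traceForm_nondegenerate hnd
  have hstable (Y : Submodule (pairSubring R F) V) :
      ∀ y ∈ Y.restrictScalars R, eProj F V y ∈ Y.restrictScalars R :=
    fun _ hy => Y.smul_mem ⟨_, fst_mem_pairSubring⟩ hy
  refine SetLike.coe_injective.existsUnique_and_of_forall_eq ?_ ?_
  · have : IsLattice F (M.restrictScalars R) :=
      (isLattice_restrictScalars_iff M).2 ⟨hMfg, hMfull⟩
    have := isLattice_dualSubmodule hB (M.restrictScalars R)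
    have hdual (x : V) := apply_mem_dualSubmodule (x := x) hadj (hstable M)
    obtain ⟨Y, hY⟩ := exists_restrictScalars_eq_of_eProj_mem _
      fun _ => apply_mem_glue hP (hstable M) hdual
    exact ⟨Y, (isLattice_restrictScalars_iff Y).1 (hY ▸ isLattice_glue _ _ _),
      congrArg SetLike.coe (hY ▸ map_glue hP (hstable M) hdual),
      (hΦ.coe_eq_iff_dualSubmodule_eq Y).2
        (hY ▸ dualSubmodule_glue_dualSubmodule hP hadj hB hΦ.traceForm_isSymm (hstable M))⟩
  · rintro Y ⟨-, hYe, hYd⟩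
    have hmap : (Y.restrictScalars R).map ((eProj F V).restrictScalars R) =
        (M.restrictScalars R).map ((eProj F V).restrictScalars R) := SetLike.coe_injective hYe
    rw [← hΦ.coe_sup_map_dualSubmodule M, ← hmap]
    exact congrArg SetLike.coe (eq_sup_map_dualSubmodule_of_dualSubmodule_eq hP hadj (hstable Y)
      ((hΦ.coe_eq_iff_dualSubmodule_eq Y).1 hYd))

theorem unique_unimodular_lattice_with_given_e_part
    {R F : Type*} [CommRing R] [IsDomain R] [IsDiscreteValuationRing R]
    [Field F] [Algebra R F] [IsFractionRing R F]
    {V : Type*} [AddCommGroup V] [Module (F × F) V]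
    [Module.Free (F × F) V] [Module.Finite (F × F) V]
    (Φ : V → V → F × F)
    (hadd₁ : ∀ x x' y : V, Φ (x + x') y = Φ x y + Φ x' y)
    (hadd₂ : ∀ x y y' : V, Φ x (y + y') = Φ x y + Φ x y')
    (hsmul₁ : ∀ (a : F × F) (x y : V), Φ (a • x) y = a * Φ x y)
    (hsmul₂ : ∀ (a : F × F) (x y : V), Φ x (a • y) = Φ x y * (a.2, a.1))
    (hherm : ∀ x y : V, Φ y x = ((Φ x y).2, (Φ x y).1))
    (hnd : ∀ x : V, (∀ y : V, Φ x y = 0) → x = 0)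
    (M : Submodule (pairSubring R F) V)
    (hMfg : M.FG) (hMfull : Submodule.span (F × F) (M : Set V) = ⊤) :
    (∃! Y : Submodule (pairSubring R F) V,
      (Y.FG ∧ Submodule.span (F × F) (Y : Set V) = ⊤) ∧
      eImage F (Y : Set V) = eImage F (M : Set V) ∧
      (Y : Set V) = {x : V | ∀ y ∈ Y, Φ x y ∈ pairSubring R F}) ∧
    (∀ Y : Submodule (pairSubring R F) V,
      ((Y.FG ∧ Submodule.span (F × F) (Y : Set V) = ⊤) ∧
        eImage F (Y : Set V) = eImage F (M : Set V) ∧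
        (Y : Set V) = {x : V | ∀ y ∈ Y, Φ x y ∈ pairSubring R F}) →
      (Y : Set V) = {z : V | ∃ u ∈ eImage F (M : Set V), ∃ x : V,
        (∃ v : V, x = (((0 : F), (1 : F)) : F × F) • v) ∧
        (∀ u' ∈ eImage F (M : Set V), Φ u' x ∈ pairSubring R F) ∧
        z = u + x}) :=
  unique_unimodular_lattice_with_given_e_part_general Φ hadd₁ hadd₂ hsmul₁ hsmul₂ hherm hnd M hMfg
    hMfull
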